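/- Let a ∈ L^∞(ℝ) be invertible in L^∞(ℝ) (i.e. a⁻¹ ∈ L^∞(ℝ)), and suppose the Wiener–Hopf operator W(a ã⁻¹) is invertible on L²(ℝ⁺). Then the operator W(a)+H(a) is invertible on L²(ℝ⁺) and (W(a)+H(a))⁻¹ = (W(ã⁻¹) + H(a⁻¹))∘W(a ã⁻¹)⁻¹. -/

import Mathlib

/-!
Write `P` for multiplication by `χ₊` and `J` for the reflection, so that `P + JPJ = I`, and
`J W⁰(b) J = W⁰(b̃)` because `𝓕` commutes with `J`. Compressing `W⁰(x) W⁰(y) = W⁰(xy)` to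
`L²(ℝ⁺)` with `P + JPJ` inserted in the middle gives the product rules
`W(xy) = W(x) W(y) + H(x) H(ỹ)` and `H(xy) = W(x) H(y) + H(x) W(ỹ)`.

Put `M = W(a) + H(a)`, `M̃ = W(ã) + H(ã)` and `c = a ã⁻¹`. The product rules give
`M (W(ã⁻¹) + H(a⁻¹)) = W(c) + H(1) = W(c)`, so `(W(ã⁻¹) + H(a⁻¹)) W(c)⁻¹` is a right inverse
of `M`; they also give `W(a⁻¹) M + H(a⁻¹) M̃ = I` and `W(c) M̃ + H(c) M = M`, so
`W(a⁻¹) + H(a⁻¹) W(c)⁻¹ (I - H(c))` is a left inverse. The two must coincide.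
-/

open MeasureTheory Complex Filter Set

noncomputable section

namespace WienerHopf

/-- The space `L²(ℝ;ℂ)`. -/
abbrev L2 : Type := Lp ℂ 2 (volume : Measure ℝ)

open Classical in
/-- Multiplication by a function `a : ℝ → ℂ`, as a bounded operator on `L²(ℝ)`.
(It is defined to be `0` in the degenerate case where `a` is not essentially bounded.) -/
def mul (a : ℝ → ℂ) : L2 →L[ℂ] L2 :=
  if h : MemLp a ⊤ (volume : Measure ℝ) then
    LinearMap.mkContinuous
      { toFun := fun f => ((Lp.memLp f).smul (r := 2) h).toLp (a • (f : ℝ → ℂ))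
        map_add' := by
          intro f g
          rw [← MemLp.toLp_add]
          apply Lp.ext
          filter_upwards [MemLp.coeFn_toLp ((Lp.memLp (f + g)).smul (r := 2) h),
            MemLp.coeFn_toLp (((Lp.memLp f).smul (r := 2) h).add
              ((Lp.memLp g).smul (r := 2) h)),
            Lp.coeFn_add f g] with t h1 h2 h3
          rw [h1, h2]
          simp only [Pi.smul_apply, smul_eq_mul, Pi.mul_apply, Pi.add_apply]
          rw [h3]
          simp [Pi.add_apply, mul_add]
        map_smul' := by
          intro m f
          simp only [RingHom.id_apply]
          rw [← MemLp.toLp_const_smul]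
          apply Lp.ext
          filter_upwards [MemLp.coeFn_toLp ((Lp.memLp (m • f)).smul (r := 2) h),
            MemLp.coeFn_toLp (((Lp.memLp f).smul (r := 2) h).const_smul m),
            Lp.coeFn_smul m f] with t h1 h2 h3
          rw [h1, h2]
          simp only [Pi.smul_apply, smul_eq_mul, Pi.mul_apply]
          rw [h3]
          simp only [Pi.smul_apply, smul_eq_mul]
          ring
        }
      (eLpNorm a ⊤ (volume : Measure ℝ)).toReal
      (by
        intro f
        simp only [LinearMap.coe_mk, AddHom.coe_mk]
        rw [Lp.norm_toLp, Lp.norm_def]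
        have hle := eLpNorm_smul_le_mul_eLpNorm (Lp.aestronglyMeasurable f) h.1
          (p := ⊤) (q := 2) (r := 2)
        calc (eLpNorm (a • (f : ℝ → ℂ)) 2 (volume : Measure ℝ)).toReal
            ≤ (eLpNorm a ⊤ (volume : Measure ℝ) * eLpNorm (f : ℝ → ℂ) 2 volume).toReal := by
              apply ENNReal.toReal_mono _ hle
              exact ENNReal.mul_ne_top h.2.ne (Lp.eLpNorm_lt_top f).ne
          _ = (eLpNorm a ⊤ (volume : Measure ℝ)).toReal *
              (eLpNorm (f : ℝ → ℂ) 2 (volume : Measure ℝ)).toReal := ENNReal.toReal_mul)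
  else 0

theorem mul_coeFn {a : ℝ → ℂ} (h : MemLp a ⊤ (volume : Measure ℝ)) (f : L2) :
    (mul a f : ℝ → ℂ) =ᵐ[volume] fun t => a t * f t := by
  rw [mul, dif_pos h]
  show ⇑(((Lp.memLp f).smul (r := 2) h).toLp (a • (f : ℝ → ℂ))) =ᵐ[volume]
    fun t => a t * f t
  exact (MemLp.coeFn_toLp _).trans
    (Eventually.of_forall fun t => by simp [Pi.smul_apply])

/-- `(-t)`-reflection is measure preserving. -/
theorem negMP : MeasurePreserving (fun t : ℝ => -t) volume volume :=
  Measure.measurePreserving_neg (volume : Measure ℝ)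

/-- The reflection operator `(Jφ)(t) = φ(-t)` on `L²(ℝ)`. -/
def reflect : L2 →L[ℂ] L2 :=
  LinearMap.mkContinuous
    { toFun := ⇑(Lp.compMeasurePreserving (fun t : ℝ => -t) negMP)
      map_add' := fun f g => map_add _ f g
      map_smul' := by
        intro m g
        simp only [RingHom.id_apply]
        apply Lp.ext
        filter_upwards [Lp.coeFn_compMeasurePreserving (f := fun t : ℝ => -t) (m • g) negMP,
          Lp.coeFn_smul m (Lp.compMeasurePreserving (fun t : ℝ => -t) negMP g),
          Lp.coeFn_compMeasurePreserving (f := fun t : ℝ => -t) g negMP,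
          negMP.quasiMeasurePreserving.ae_eq_comp (Lp.coeFn_smul m g)] with t h1 h2 h3 h4
        rw [h1, h2, h4]
        simp only [Function.comp_apply, Pi.smul_apply, smul_eq_mul]
        rw [h3]
        simp only [Function.comp_apply]
      }
    1
    (by
      intro g
      rw [one_mul]
      exact le_of_eq (Lp.norm_compMeasurePreserving g _))

theorem reflect_coeFn (g : L2) :
    (reflect g : ℝ → ℂ) =ᵐ[volume] fun t => g (-t) :=
  Lp.coeFn_compMeasurePreserving (f := fun t : ℝ => -t) g negMP

/-- The indicator function of `(0,∞)`. -/
def chiPlus : ℝ → ℂ := Set.indicator (Set.Ioi (0 : ℝ)) (fun _ => 1)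

theorem chiPlus_memℒp : MemLp chiPlus ⊤ (volume : Measure ℝ) :=
  (memLp_top_const (1 : ℂ)).indicator measurableSet_Ioi

/-- The subspace of `L²(ℝ)` consisting of functions vanishing a.e. on `(-∞,0)`;
it is identified with `L²(ℝ⁺)`. -/
def posSubspace : Submodule ℂ L2 where
  carrier := {f : L2 | ∀ᵐ t : ℝ ∂volume, t < 0 → (f : ℝ → ℂ) t = 0}
  zero_mem' := by
    filter_upwards [Lp.coeFn_zero ℂ 2 (volume : Measure ℝ)] with t ht _
    simp [ht]
  add_mem' := by
    intro f g hf hg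
    filter_upwards [hf, hg, Lp.coeFn_add f g] with t h1 h2 h3 hlt
    rw [h3]
    simp [Pi.add_apply, h1 hlt, h2 hlt]
  smul_mem' := by
    intro m f hf
    filter_upwards [hf, Lp.coeFn_smul m f] with t h1 h2 hlt
    rw [h2]
    simp [Pi.smul_apply, h1 hlt]

/-- `L²(ℝ⁺)`, realized as the subspace of `L²(ℝ)` of functions vanishing a.e. on `(-∞,0)`. -/
abbrev Lp2Plus : Type := ↥posSubspace

theorem chiPlus_mul_mem (g : L2) : mul chiPlus g ∈ posSubspace := by
  filter_upwards [mul_coeFn chiPlus_memℒp g] with t ht hlt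
  rw [ht, chiPlus, Set.indicator_of_notMem (by simpa using hlt.le), zero_mul]

/-- Compression of an operator on `L²(ℝ)` to the subspace `L²(ℝ⁺)`:
`φ ↦ χ₊ ⬝ (T φ)`. -/
def compress (T : L2 →L[ℂ] L2) : Lp2Plus →L[ℂ] Lp2Plus :=
  LinearMap.mkContinuous
    { toFun := fun φ => ⟨mul chiPlus (T φ.val), chiPlus_mul_mem _⟩
      map_add' := by intro φ ψ; apply Subtype.ext; simp
      map_smul' := by intro m φ; apply Subtype.ext; simp }
    ‖(mul chiPlus).comp T‖
    (by intro φ; exact ((mul chiPlus).comp T).le_opNorm φ.val)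

theorem compress_coe (T : L2 →L[ℂ] L2) (φ : Lp2Plus) :
    (compress T φ : L2) = mul chiPlus (T φ.val) := rfl

/-- An abstract realization of the Fourier transform
`(𝓕φ)(ξ) = ∫ e^{iξx} φ(x) dx` on `L²(ℝ)` (together with its inverse
`(𝓕⁻¹ψ)(x) = (2π)⁻¹ ∫ e^{-iξx} ψ(ξ) dξ`): a continuous linear bijection of `L²(ℝ)`
that is given by the above integral formulas on integrable functions.  By density
of `L¹ ∩ L²` in `L²`, these properties determine the operator uniquely, and by the
Fourier–Plancherel theory such an operator exists. -/
structure FourierL2 where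
  equiv : L2 ≃L[ℂ] L2
  forward : ∀ φ : L2, Integrable (φ : ℝ → ℂ) volume →
      (equiv φ : ℝ → ℂ) =ᵐ[volume]
        fun ξ : ℝ => ∫ x : ℝ, Complex.exp (Complex.I * ξ * x) * φ x
  inverse : ∀ ψ : L2, Integrable (ψ : ℝ → ℂ) volume →
      (equiv.symm ψ : ℝ → ℂ) =ᵐ[volume]
        fun x : ℝ => (2 * Real.pi : ℂ)⁻¹ * ∫ ξ : ℝ, Complex.exp (-(Complex.I * ξ * x)) * ψ ξ

/-- `W⁰(a) = 𝓕⁻¹ M_a 𝓕`, the convolution (Fourier multiplier) operator on `L²(ℝ)`. -/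
def W0 (F : FourierL2) (a : ℝ → ℂ) : L2 →L[ℂ] L2 :=
  (F.equiv.symm : L2 →L[ℂ] L2).comp ((mul a).comp (F.equiv : L2 →L[ℂ] L2))

/-- The Wiener–Hopf operator `W(a) = χ₊ W⁰(a)` on `L²(ℝ⁺)`. -/
def W (F : FourierL2) (a : ℝ → ℂ) : Lp2Plus →L[ℂ] Lp2Plus :=
  compress (W0 F a)

/-- The Hankel operator `H(b) = χ₊ W⁰(b) J` on `L²(ℝ⁺)`. -/
def H (F : FourierL2) (b : ℝ → ℂ) : Lp2Plus →L[ℂ] Lp2Plus :=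
  compress ((W0 F b).comp reflect)

/-- `a` is invertible in the Banach algebra `L^∞(ℝ)`: `a ∈ L^∞`, `a ≠ 0` a.e.,
and the pointwise inverse `a⁻¹` again belongs to `L^∞`. -/
def InvertibleLinf (a : ℝ → ℂ) : Prop :=
  MemLp a ⊤ (volume : Measure ℝ) ∧ (∀ᵐ t : ℝ ∂volume, a t ≠ 0) ∧
    MemLp (fun t => (a t)⁻¹) ⊤ (volume : Measure ℝ)

/-- `(a,b)` is a matching pair: `a, b` are invertible in `L^∞(ℝ)` and
`a(t)a(-t) = b(t)b(-t)` for a.e. `t`. -/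
def MatchingPair (a b : ℝ → ℂ) : Prop :=
  InvertibleLinf a ∧ InvertibleLinf b ∧
    ∀ᵐ t : ℝ ∂volume, a t * a (-t) = b t * b (-t)

theorem memLp_top_comp_neg {x : ℝ → ℂ} (hx : MemLp x ⊤ (volume : Measure ℝ)) :
    MemLp (fun t => x (-t)) ⊤ (volume : Measure ℝ) :=
  hx.comp_measurePreserving negMP

theorem memLp_top_comp_neg_iff {x : ℝ → ℂ} :
    MemLp (fun t => x (-t)) ⊤ (volume : Measure ℝ) ↔ MemLp x ⊤ (volume : Measure ℝ) :=
  ⟨fun h => by simpa using memLp_top_comp_neg h, memLp_top_comp_neg⟩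

theorem mul_congr_ae {x y : ℝ → ℂ} (hxy : x =ᵐ[volume] y) : mul x = mul y := by
  by_cases hx : MemLp x ⊤ (volume : Measure ℝ)
  · ext f
    filter_upwards [mul_coeFn hx f, mul_coeFn (hx.ae_eq hxy) f, hxy] with t h1 h2 h3
    rw [h1, h2, h3]
  · have hy : ¬ MemLp y ⊤ (volume : Measure ℝ) := fun h => hx (h.ae_eq hxy.symm)
    rw [mul, mul, dif_neg hx, dif_neg hy]

theorem mul_fun_mul {x y : ℝ → ℂ} (hx : MemLp x ⊤ (volume : Measure ℝ))
    (hy : MemLp y ⊤ (volume : Measure ℝ)) : mul (x * y) = mul x * mul y := by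
  ext f
  filter_upwards [mul_coeFn hx (mul y f), mul_coeFn hy f, mul_coeFn (hy.mul hx) f]
    with t h1 h2 h3
  rw [mul_apply_eq_comp, h1, h2, h3, Pi.mul_apply, mul_assoc]

theorem mul_fun_add {x y : ℝ → ℂ} (hx : MemLp x ⊤ (volume : Measure ℝ))
    (hy : MemLp y ⊤ (volume : Measure ℝ)) : mul (x + y) = mul x + mul y := by
  ext f
  filter_upwards [mul_coeFn hx f, mul_coeFn hy f, mul_coeFn (hx.add hy) f,
    Lp.coeFn_add (mul x f) (mul y f)] with t h1 h2 h3 h4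
  rw [add_apply, h4, h3, Pi.add_apply, Pi.add_apply, h1, h2, add_mul]

theorem mul_const_one : mul (fun _ => 1) = 1 := by
  ext f
  filter_upwards [mul_coeFn (memLp_top_const (1 : ℂ)) f] with t h
  rw [h, one_mul, one_apply_eq_self]

theorem reflect_mul_reflect : reflect * reflect = 1 := by
  ext f
  filter_upwards [reflect_coeFn (reflect f),
    negMP.quasiMeasurePreserving.ae_eq (reflect_coeFn f)] with t h1 h2
  simp only [Function.comp_apply, neg_neg] at h2
  rw [mul_apply_eq_comp, h1, h2, one_apply_eq_self]

theorem reflect_mul_mul (x : ℝ → ℂ) : reflect * mul x = mul (fun t => x (-t)) * reflect := by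
  by_cases hx : MemLp x ⊤ (volume : Measure ℝ)
  · ext f
    filter_upwards [reflect_coeFn (mul x f),
      negMP.quasiMeasurePreserving.ae_eq (mul_coeFn hx f),
      mul_coeFn (memLp_top_comp_neg hx) (reflect f), reflect_coeFn f] with t h1 h2 h3 h4
    simp only [Function.comp_apply] at h2
    rw [mul_apply_eq_comp, mul_apply_eq_comp, h1, h2, h3, h4]
  · rw [mul, mul, dif_neg hx, dif_neg (mt memLp_top_comp_neg_iff.1 hx), mul_zero, zero_mul]

theorem chiPlus_add_chiPlus_neg :
    chiPlus + (fun t => chiPlus (-t)) =ᵐ[volume] fun _ => 1 := by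
  filter_upwards [volume.ae_ne 0] with t ht
  rcases ht.lt_or_gt with h | h <;> simp [chiPlus, h, h.not_gt]

theorem mul_chiPlus_add_reflect_conj : mul chiPlus + reflect * mul chiPlus * reflect = 1 := by
  rw [reflect_mul_mul, mul_assoc, reflect_mul_reflect, mul_one,
    ← mul_fun_add chiPlus_memℒp (memLp_top_comp_neg chiPlus_memℒp),
    mul_congr_ae chiPlus_add_chiPlus_neg, mul_const_one]

theorem mul_chiPlus_of_mem {f : L2} (hf : f ∈ posSubspace) : mul chiPlus f = f := by
  apply Lp.ext
  filter_upwards [mul_coeFn chiPlus_memℒp f, hf, volume.ae_ne 0] with t h1 h2 h3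
  rcases h3.lt_or_gt with h | h
  · rw [h1, h2 h, mul_zero]
  · rw [h1, chiPlus, indicator_of_mem (mem_Ioi.2 h), one_mul]

theorem mul_chiPlus_reflect_of_mem {f : L2} (hf : f ∈ posSubspace) :
    mul chiPlus (reflect f) = 0 := by
  have h := congrArg (fun T => T (reflect f)) mul_chiPlus_add_reflect_conj
  have hJJ : reflect (reflect f) = f := by
    rw [← mul_apply_eq_comp, reflect_mul_reflect, one_apply_eq_self]
  simp only [add_apply, mul_apply_eq_comp, one_apply_eq_self, hJJ, mul_chiPlus_of_mem hf] at h
  exact add_eq_right.1 h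

theorem compress_mul (A B : L2 →L[ℂ] L2) :
    compress (A * B) =
      compress A * compress B + compress (A * reflect) * compress (reflect * B) := by
  ext1 φ
  apply Subtype.ext
  have h := congrArg (fun T => mul chiPlus (A (T (B φ)))) mul_chiPlus_add_reflect_conj
  simp only [add_apply, mul_apply_eq_comp, one_apply_eq_self, map_add] at h
  simp only [add_apply, mul_apply_eq_comp, Submodule.coe_add, compress_coe, h]

theorem compress_one : compress 1 = 1 := by
  ext1 φ
  exact Subtype.ext (mul_chiPlus_of_mem φ.2)

theorem compress_reflect : compress reflect = 0 := by
  ext1 φ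
  exact Subtype.ext (mul_chiPlus_reflect_of_mem φ.2)

section FourierMultiplier

variable (F : FourierL2)

theorem fourier_reflect_of_integrable {f : L2}
    (hf : Integrable (f : ℝ → ℂ) volume) : F.equiv (reflect f) = reflect (F.equiv f) := by
  have hrf : Integrable (reflect f : ℝ → ℂ) volume :=
    (negMP.integrable_comp_of_integrable hf).congr (reflect_coeFn f).symm
  apply Lp.ext
  filter_upwards [F.forward (reflect f) hrf, reflect_coeFn (F.equiv f),
    negMP.quasiMeasurePreserving.ae_eq (F.forward f hf)] with ξ h1 h2 h3
  simp only [Function.comp_apply] at h3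
  rw [h1, h2, h3, ← integral_neg_eq_self (fun x : ℝ => cexp (I * ↑(-ξ) * x) * f x)]
  refine integral_congr_ae ?_
  filter_upwards [reflect_coeFn f] with x hx
  rw [hx]
  push_cast
  ring_nf

theorem fourier_mul_reflect :
    (F.equiv : L2 →L[ℂ] L2) * reflect = reflect * F.equiv := by
  ext1 f
  refine Lp.induction (p := 2) ENNReal.ofNat_ne_top
    (fun f : L2 => ((F.equiv : L2 →L[ℂ] L2) * reflect) f = (reflect * F.equiv) f) ?_ ?_ ?_ f
  · intro c s hs hμs
    apply fourier_reflect_of_integrable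
    rw [Lp.simpleFunc.coe_indicatorConst]
    exact integrable_indicatorConstLp hs hμs.ne c
  · intro g1 g2 _ _ _ h1 h2
    rw [map_add, map_add, h1, h2]
  · exact isClosed_eq (ContinuousLinearMap.continuous _) (ContinuousLinearMap.continuous _)

theorem fourier_mul_fourier_symm : (F.equiv : L2 →L[ℂ] L2) * F.equiv.symm = 1 := by
  ext1 f
  exact F.equiv.apply_symm_apply f

theorem fourier_symm_mul_fourier : (F.equiv.symm : L2 →L[ℂ] L2) * F.equiv = 1 := by
  ext1 f
  exact F.equiv.symm_apply_apply f

theorem fourier_symm_mul_reflect :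
    (F.equiv.symm : L2 →L[ℂ] L2) * reflect = reflect * F.equiv.symm :=
  calc (F.equiv.symm : L2 →L[ℂ] L2) * reflect
      = F.equiv.symm * (reflect * F.equiv) * F.equiv.symm := by
        rw [mul_assoc _ _ (F.equiv.symm : L2 →L[ℂ] L2), mul_assoc reflect,
          fourier_mul_fourier_symm, mul_one]
    _ = reflect * F.equiv.symm := by
        rw [← fourier_mul_reflect, ← mul_assoc, fourier_symm_mul_fourier, one_mul]

theorem W0_eq (x : ℝ → ℂ) : W0 F x = (F.equiv.symm : L2 →L[ℂ] L2) * mul x * F.equiv := rfl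

theorem W0_congr_ae {x y : ℝ → ℂ} (hxy : x =ᵐ[volume] y) : W0 F x = W0 F y := by
  rw [W0_eq, W0_eq, mul_congr_ae hxy]

theorem W0_const_one : W0 F (fun _ => 1) = 1 := by
  rw [W0_eq, mul_const_one, mul_one, fourier_symm_mul_fourier]

theorem W0_mul {x y : ℝ → ℂ} (hx : MemLp x ⊤ (volume : Measure ℝ))
    (hy : MemLp y ⊤ (volume : Measure ℝ)) : W0 F (x * y) = W0 F x * W0 F y := by
  simp only [W0_eq, mul_fun_mul hx hy, mul_assoc]
  rw [← mul_assoc (F.equiv : L2 →L[ℂ] L2), fourier_mul_fourier_symm, one_mul]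

theorem reflect_mul_W0 (x : ℝ → ℂ) : reflect * W0 F x = W0 F (fun t => x (-t)) * reflect := by
  rw [W0_eq, W0_eq, ← mul_assoc, ← mul_assoc, ← fourier_symm_mul_reflect, mul_assoc _ reflect,
    reflect_mul_mul, ← mul_assoc, mul_assoc _ _ reflect, mul_assoc _ _ reflect, fourier_mul_reflect]
  simp only [mul_assoc]

theorem W_eq (x : ℝ → ℂ) : W F x = compress (W0 F x) := rfl

theorem H_eq (x : ℝ → ℂ) : H F x = compress (W0 F x * reflect) := rfl

theorem W_congr_ae {x y : ℝ → ℂ} (hxy : x =ᵐ[volume] y) : W F x = W F y := by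
  rw [W_eq, W_eq, W0_congr_ae F hxy]

theorem H_congr_ae {x y : ℝ → ℂ} (hxy : x =ᵐ[volume] y) : H F x = H F y := by
  rw [H_eq, H_eq, W0_congr_ae F hxy]

theorem W_const_one : W F (fun _ => 1) = 1 := by
  rw [W_eq, W0_const_one, compress_one]

theorem H_const_one : H F (fun _ => 1) = 0 := by
  rw [H_eq, W0_const_one, one_mul, compress_reflect]

theorem W_mul {x y : ℝ → ℂ} (hx : MemLp x ⊤ (volume : Measure ℝ))
    (hy : MemLp y ⊤ (volume : Measure ℝ)) :
    W F (x * y) = W F x * W F y + H F x * H F (fun t => y (-t)) := by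
  rw [W_eq, W0_mul F hx hy, compress_mul, reflect_mul_W0]
  rfl

theorem H_mul {x y : ℝ → ℂ} (hx : MemLp x ⊤ (volume : Measure ℝ))
    (hy : MemLp y ⊤ (volume : Measure ℝ)) :
    H F (x * y) = W F x * H F y + H F x * W F (fun t => y (-t)) := by
  rw [H_eq, W0_mul F hx hy, mul_assoc, compress_mul, ← mul_assoc reflect,
    reflect_mul_W0, mul_assoc, reflect_mul_reflect, mul_one]
  rfl

theorem W_add_H_mul_W_add_H_reflect {x y : ℝ → ℂ} (hx : MemLp x ⊤ (volume : Measure ℝ))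
    (hy : MemLp y ⊤ (volume : Measure ℝ)) :
    (W F x + H F x) * (W F y + H F fun t => y (-t)) =
      W F (x * y) + H F (x * fun t => y (-t)) := by
  rw [W_mul F hx hy, H_mul F hx (memLp_top_comp_neg hy)]
  simp only [neg_neg]
  noncomm_ring

theorem W_mul_W_add_H_add_H_mul_reflect {x y : ℝ → ℂ} (hx : MemLp x ⊤ (volume : Measure ℝ))
    (hy : MemLp y ⊤ (volume : Measure ℝ)) :
    W F x * (W F y + H F y) + H F x * (W F (fun t => y (-t)) + H F fun t => y (-t)) =
      W F (x * y) + H F (x * y) := by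
  rw [W_mul F hx hy, H_mul F hx hy]
  noncomm_ring

theorem W_add_H_mul_W_inv_reflect_add_H_inv {a : ℝ → ℂ} (ha : InvertibleLinf a) :
    (W F a + H F a) * (W F (fun t => (a (-t))⁻¹) + H F fun t => (a t)⁻¹) =
      W F fun t => a t * (a (-t))⁻¹ := by
  obtain ⟨ha, ha_ne, ha_inv⟩ := ha
  have h_mul_inv : (a * fun t => (a t)⁻¹) =ᵐ[volume] fun _ => 1 := by
    filter_upwards [ha_ne] with t ht using mul_inv_cancel₀ ht
  have h := W_add_H_mul_W_add_H_reflect F ha (memLp_top_comp_neg ha_inv)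
  simp only [neg_neg] at h
  rw [h, H_congr_ae F h_mul_inv, H_const_one, add_zero]
  rfl

theorem W_inv_mul_W_add_H_add_H_inv_mul_reflect {a : ℝ → ℂ} (ha : InvertibleLinf a) :
    W F (fun t => (a t)⁻¹) * (W F a + H F a) +
      H F (fun t => (a t)⁻¹) * (W F (fun t => a (-t)) + H F fun t => a (-t)) = 1 := by
  obtain ⟨ha, ha_ne, ha_inv⟩ := ha
  have h_inv_mul : ((fun t => (a t)⁻¹) * a) =ᵐ[volume] fun _ => 1 := by
    filter_upwards [ha_ne] with t ht using inv_mul_cancel₀ ht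
  rw [W_mul_W_add_H_add_H_mul_reflect F ha_inv ha, W_congr_ae F h_inv_mul,
    H_congr_ae F h_inv_mul, W_const_one, H_const_one, add_zero]

theorem W_mul_reflect_add_H_mul_W_add_H {a : ℝ → ℂ} (ha : InvertibleLinf a) :
    (W F fun t => a t * (a (-t))⁻¹) * (W F (fun t => a (-t)) + H F fun t => a (-t)) +
      (H F fun t => a t * (a (-t))⁻¹) * (W F a + H F a) = W F a + H F a := by
  obtain ⟨ha, ha_ne, ha_inv⟩ := ha
  have hc : MemLp (fun t => a t * (a (-t))⁻¹) ⊤ volume := (memLp_top_comp_neg ha_inv).mul' ha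
  have h_cancel : ((fun t => a t * (a (-t))⁻¹) * fun t => a (-t)) =ᵐ[volume] a := by
    filter_upwards [negMP.quasiMeasurePreserving.ae ha_ne] with t ht
    exact inv_mul_cancel_right₀ ht (a t)
  have h := W_mul_W_add_H_add_H_mul_reflect F hc (memLp_top_comp_neg ha)
  simp only [neg_neg] at h
  rwa [W_congr_ae F h_cancel, H_congr_ae F h_cancel] at h

end FourierMultiplier

/-- If `a` is invertible in `L^∞(ℝ)` and `W(a ã⁻¹)` is invertible, then `W(a)+H(a)` is
invertible with inverse `(W(ã⁻¹) + H(a⁻¹)) W(a ã⁻¹)⁻¹`. -/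
theorem inverse_W_plus_H_same_symbol
    (F : FourierL2) (a : ℝ → ℂ) (ha : InvertibleLinf a)
    (E : Lp2Plus →L[ℂ] Lp2Plus)
    (hE1 : (W F (fun t => a t * (a (-t))⁻¹)).comp E = 1)
    (hE2 : E.comp (W F (fun t => a t * (a (-t))⁻¹)) = 1)
    (K : Lp2Plus →L[ℂ] Lp2Plus)
    (hK : K = (W F (fun t => (a (-t))⁻¹) + H F (fun t => (a t)⁻¹)).comp E) :
    (W F a + H F a).comp K = 1 ∧ K.comp (W F a + H F a) = 1 := by
  simp only [← ContinuousLinearMap.mul_def] at hE1 hE2 hK ⊢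
  have hMK : (W F a + H F a) * K = 1 := by
    rw [hK, ← mul_assoc, W_add_H_mul_W_inv_reflect_add_H_inv F ha, hE1]
  have h_reflected : W F (fun t => a (-t)) + H F (fun t => a (-t)) =
      E * (1 - H F fun t => a t * (a (-t))⁻¹) * (W F a + H F a) := by
    rw [mul_assoc, sub_mul, one_mul, ← eq_sub_of_add_eq (W_mul_reflect_add_H_mul_W_add_H F ha),
      ← mul_assoc, hE2, one_mul]
  have hLM : (W F (fun t => (a t)⁻¹) + H F (fun t => (a t)⁻¹) * E *
      (1 - H F fun t => a t * (a (-t))⁻¹)) * (W F a + H F a) = 1 := by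
    have h := W_inv_mul_W_add_H_add_H_inv_mul_reflect F ha
    rw [h_reflected, ← mul_assoc, ← mul_assoc] at h
    rwa [add_mul]
  exact ⟨hMK, left_inv_eq_right_inv hLM hMK ▸ hLM⟩

end WienerHopf
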